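/- Let t, s ≥ 1 and let (c_n) be an oscillating sequence of order t·s. Let X be a set, T : X → X any map, x ∈ X, and let f_1, …, f_k : X → ℂ satisfy |f_i| ≡ 1 and Λ^{t+1} f_i ≡ 1 for each i, where (Λf)(x) = f(Tx)·conj(f(x)). Let q_1, …, q_k : ℕ → ℕ be polynomial maps of degree at most s taking nonnegative integer values. Then (1/N) ∑_{n=0}^{N-1} c_n ∏_{i=1}^{k} f_i(T^{q_i(n)} x) → 0 as N → ∞. -/

import Mathlib

open Filter Finset

/-- `c` is an oscillating sequence of order `k`. -/
def OscillatingOfOrder (c : ℕ → ℂ) (k : ℕ) : Prop :=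
  (∃ l : ℝ, 1 ≤ l ∧
      (fun N : ℕ => ∑ n ∈ Finset.Icc 1 N, ‖c n‖ ^ l)
        =O[atTop] (fun N : ℕ => (N : ℝ))) ∧
  ∀ P : Polynomial ℝ, P.natDegree ≤ k →
    Tendsto (fun N : ℕ => (N : ℂ)⁻¹ *
        ∑ n ∈ Finset.Icc 1 N, c n * Complex.exp (2 * Real.pi * Complex.I * (P.eval (n : ℝ))))
      atTop (nhds 0)

/-- The derived homomorphism `(Λ f) x = f (T x) · conj (f x)` on complex valued functions. -/
def derivedHom {X : Type*} (T : X → X) (f : X → ℂ) : X → ℂ :=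
  fun x => f (T x) * (starRingEnd ℂ) (f x)

/-!
Along an orbit, `n ↦ f (T^[n] x)` is a unimodular sequence whose `(t+1)`-st multiplicative
difference is `1`. Adding up the phases of its differences gives a real phase `φ` whose
`(t+1)`-st forward difference vanishes, so by the Gregory–Newton formula `φ` is a real polynomial
of degree at most `t`. Composing with the `q_i` and multiplying, the weight is `e(R(n))` with
`deg R ≤ t s`, which the oscillation hypothesis kills; passing from `∑_{1 ≤ n ≤ N}` to
`∑_{0 ≤ n < N}` only costs `O(1/N)`.
-/

-- `Δ_[1]^[k]` would not parse: `]^` is lexed as one token.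
open Polynomial fwdDiff

section DerivedHom

variable {X : Type*} {T : X → X} {f : X → ℂ}

theorem norm_derivedHom (hf : ∀ x, ‖f x‖ = 1) (x : X) : ‖derivedHom T f x‖ = 1 := by
  simp [derivedHom, hf]

theorem derivedHom_mul_self (hf : ∀ x, ‖f x‖ = 1) (x : X) :
    derivedHom T f x * f x = f (T x) := by
  rw [derivedHom, mul_assoc, mul_comm (starRingEnd ℂ (f x)), Complex.mul_conj,
    Complex.normSq_eq_norm_sq, hf, one_pow, Complex.ofReal_one, mul_one]

end DerivedHom

theorem Function.Semiconj.iterate_derivedHom_comp {X Y : Type*} {T : X → X} {S : Y → Y}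
    {φ : Y → X} (h : Function.Semiconj φ S T) (j : ℕ) (f : X → ℂ) :
    (derivedHom S)^[j] (f ∘ φ) = (derivedHom T)^[j] f ∘ φ := by
  have : Function.Semiconj (· ∘ φ) (derivedHom T) (derivedHom S) := fun f ↦ by
    funext y
    simp [derivedHom, h.eq y]
  exact (this.iterate_right j f).symm

theorem Complex.exists_exp_two_pi_mul_I_eq {z : ℂ} (hz : ‖z‖ = 1) :
    ∃ θ : ℝ, exp (2 * Real.pi * I * θ) = z := by
  obtain ⟨θ, rfl⟩ := (norm_eq_one_iff z).mp hz
  refine ⟨θ / (2 * Real.pi), congr_arg exp ?_⟩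
  push_cast
  field_simp

theorem exists_polynomial_of_fwdDiff_iter_eq_zero {K : Type*} [Field K] [CharZero K]
    {φ : ℕ → K} {t : ℕ} (h : Δ_[1] ^[t + 1] φ = 0) :
    ∃ P : K[X], P.natDegree ≤ t ∧ ∀ n : ℕ, φ n = P.eval (n : K) := by
  have vanish : ∀ k, t < k → Δ_[1] ^[k] φ = 0 := fun k hk ↦ by
    obtain ⟨j, rfl⟩ := Nat.exists_eq_add_of_le hk
    rw [add_comm, Function.iterate_add_apply, h]
    exact Function.iterate_fixed (fwdDiff_const 1 0) j
  refine ⟨∑ k ∈ range (t + 1), C (Δ_[1] ^[k] φ 0 / k.factorial) * descPochhammer K k, ?_,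
    fun n ↦ ?_⟩
  · refine natDegree_sum_le_of_forall_le _ _ fun k hk ↦ natDegree_C_mul_le _ _ |>.trans ?_
    simpa [Nat.lt_succ_iff] using hk
  calc φ n = ∑ k ∈ range (n + 1), n.choose k • Δ_[1] ^[k] φ 0 := by
        simpa using shift_eq_sum_fwdDiff_iter 1 φ n 0
    _ = ∑ k ∈ range (n + t + 2), n.choose k • Δ_[1] ^[k] φ 0 :=
        sum_subset (range_mono (by omega)) fun k _ hk ↦ by
          rw [Nat.choose_eq_zero_of_lt (by simpa using hk), zero_smul]
    _ = ∑ k ∈ range (t + 1), n.choose k • Δ_[1] ^[k] φ 0 :=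
        (sum_subset (range_mono (by omega)) fun k _ hk ↦ by
          rw [vanish k (by simpa using hk), Pi.zero_apply, smul_zero]).symm
    _ = _ := by
        simp only [eval_finsetSum, eval_mul, eval_C, nsmul_eq_mul,
          Nat.cast_choose_eq_descPochhammer_div]
        exact sum_congr rfl fun k _ ↦ by ring

theorem exists_phase_fwdDiff_iter_eq_zero_of_iterate_derivedHom_eq_one {g : ℕ → ℂ}
    (hg : ∀ n, ‖g n‖ = 1) {t : ℕ} (h : (derivedHom (· + 1))^[t] g = 1) :
    ∃ φ : ℕ → ℝ, Δ_[1] ^[t] φ = 0 ∧ ∀ n, g n = Complex.exp (2 * Real.pi * Complex.I * φ n) := by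
  induction t generalizing g with
  | zero => exact ⟨0, rfl, fun n ↦ by simp [show g = 1 from h]⟩
  | succ t ih =>
    rw [Function.iterate_succ_apply] at h
    obtain ⟨ψ, hψ, hgψ⟩ := ih (norm_derivedHom hg) h
    obtain ⟨θ, hθ⟩ := Complex.exists_exp_two_pi_mul_I_eq (hg 0)
    refine ⟨fun n ↦ θ + ∑ m ∈ range n, ψ m, ?_, fun n ↦ ?_⟩
    · rw [Function.iterate_succ_apply, ← hψ]
      congr 1
      funext n
      simp [fwdDiff, sum_range_succ]
    induction n with
    | zero => simp [hθ]
    | succ n ihn =>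
      rw [← derivedHom_mul_self (T := (· + 1)) hg n, hgψ, ihn, ← Complex.exp_add]
      simp only [sum_range_succ]
      push_cast
      ring_nf

theorem exists_polynomial_phase_of_iterate_derivedHom_eq_one {X : Type*} {T : X → X}
    {f : X → ℂ} (hf : ∀ x, ‖f x‖ = 1) {t : ℕ} (hquasi : ∀ x, (derivedHom T)^[t + 1] f x = 1)
    (x : X) :
    ∃ P : ℝ[X], P.natDegree ≤ t ∧
      ∀ n : ℕ, f (T^[n] x) = Complex.exp (2 * Real.pi * Complex.I * P.eval (n : ℝ)) := by
  have orbit : Function.Semiconj (fun n ↦ T^[n] x) (· + 1) T := fun n ↦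
    Function.iterate_succ_apply' T n x
  obtain ⟨φ, hφ, hfφ⟩ := exists_phase_fwdDiff_iter_eq_zero_of_iterate_derivedHom_eq_one
    (fun n ↦ hf (T^[n] x))
    ((orbit.iterate_derivedHom_comp (t + 1) f).trans (funext fun n ↦ hquasi _))
  obtain ⟨P, hP, hφP⟩ := exists_polynomial_of_fwdDiff_iter_eq_zero hφ
  exact ⟨P, hP, fun n ↦ by rw [hfφ, hφP]⟩

theorem tendsto_inv_mul_sum_range_of_tendsto_inv_mul_sum_Icc {𝕜 : Type*} [RCLike 𝕜]
    {a : ℕ → 𝕜} (h : Tendsto (fun N : ℕ ↦ (N : 𝕜)⁻¹ * ∑ n ∈ Icc 1 N, a n) atTop (nhds 0)) :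
    Tendsto (fun N : ℕ ↦ (N : 𝕜)⁻¹ * ∑ n ∈ range N, a n) atTop (nhds 0) := by
  rw [← tendsto_add_atTop_iff_nat 1]
  have split : ∀ N : ℕ, ((N + 1 : ℕ) : 𝕜)⁻¹ * ∑ n ∈ range (N + 1), a n =
      1 / ((N : 𝕜) + 1) * a 0 + (N : 𝕜) / (N + 1) * ((N : 𝕜)⁻¹ * ∑ n ∈ Icc 1 N, a n) := by
    intro N
    rw [range_eq_Ico, sum_eq_sum_Ico_succ_bot N.succ_pos, zero_add, Nat.succ_eq_add_one,
      Ico_add_one_right_eq_Icc]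
    rcases N.eq_zero_or_pos with rfl | hN
    · simp
    · have : (N : 𝕜) ≠ 0 := Nat.cast_ne_zero.mpr hN.ne'
      push_cast
      field_simp
  simp_rw [split]
  simpa using ((tendsto_one_div_add_atTop_nhds_zero_nat).mul_const (a 0)).add
    ((tendsto_natCast_div_add_atTop (1 : 𝕜)).mul h)

theorem oscillating_orthogonal_to_polynomial_orbits_of_quasiEigenfunctions_general
    {X : Type*} (T : X → X) (t s : ℕ)
    (c : ℕ → ℂ) (hc : OscillatingOfOrder c (t * s)) (x : X)
    (k : ℕ) (f : Fin k → X → ℂ)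
    (hmod : ∀ i y, ‖f i y‖ = 1)
    (hquasi : ∀ i y, ((derivedHom T)^[t + 1] (f i)) y = 1)
    (q : Fin k → ℕ → ℕ)
    (hq : ∀ i, ∃ Q : Polynomial ℝ, Q.natDegree ≤ s ∧ ∀ n : ℕ, (q i n : ℝ) = Q.eval (n : ℝ)) :
    Tendsto (fun N : ℕ => (N : ℂ)⁻¹ *
        ∑ n ∈ Finset.range N, c n * ∏ i : Fin k, f i (T^[q i n] x))
      atTop (nhds 0) := by
  choose P hP hfP using fun i ↦
    exists_polynomial_phase_of_iterate_derivedHom_eq_one (hmod i) (hquasi i) x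
  choose Q hQ hqQ using hq
  set R : ℝ[X] := ∑ i, (P i).comp (Q i)
  have hR : R.natDegree ≤ t * s := natDegree_sum_le_of_forall_le _ _ fun i _ ↦
    natDegree_comp_le.trans (Nat.mul_le_mul (hP i) (hQ i))
  have phase : ∀ n : ℕ, ∏ i, f i (T^[q i n] x) =
      Complex.exp (2 * Real.pi * Complex.I * R.eval (n : ℝ)) := fun n ↦ by
    simp only [hfP, hqQ, ← Complex.exp_sum, ← mul_sum, R, eval_finsetSum, eval_comp,
      Complex.ofReal_sum]
  simpa only [phase] using tendsto_inv_mul_sum_range_of_tendsto_inv_mul_sum_Icc (hc.2 R hR)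

/-- Fan's polynomial-orbit theorem for quasi-eigenfunctions: an oscillating sequence of order
`t·s` is orthogonal to `∏_i f_i (T^{q_i(n)} x)` whenever each `f_i` is a unimodular function
with `Λ^{t+1} f_i ≡ 1` (quasi-eigenfunction of order `t`) and each `q_i : ℕ → ℕ` agrees with a
real polynomial of degree at most `s`. -/
theorem oscillating_orthogonal_to_polynomial_orbits_of_quasiEigenfunctions
    {X : Type*} (T : X → X) (t s : ℕ) (ht : 1 ≤ t) (hs : 1 ≤ s)
    (c : ℕ → ℂ) (hc : OscillatingOfOrder c (t * s)) (x : X)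
    (k : ℕ) (f : Fin k → X → ℂ)
    (hmod : ∀ i y, ‖f i y‖ = 1)
    (hquasi : ∀ i y, ((derivedHom T)^[t + 1] (f i)) y = 1)
    (q : Fin k → ℕ → ℕ)
    (hq : ∀ i, ∃ Q : Polynomial ℝ, Q.natDegree ≤ s ∧ ∀ n : ℕ, (q i n : ℝ) = Q.eval (n : ℝ)) :
    Tendsto (fun N : ℕ => (N : ℂ)⁻¹ *
        ∑ n ∈ Finset.range N, c n * ∏ i : Fin k, f i (T^[q i n] x))
      atTop (nhds 0) :=
  oscillating_orthogonal_to_polynomial_orbits_of_quasiEigenfunctions_general T t s c hc x k f hmod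
    hquasi q hq
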